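/- Upper bound for the normalization integral at p = n. Let n ≥ 1 be an integer and let ω_n be the Lebesgue volume of the unit ball in ℝⁿ. Then I_n = ∫_{ℝⁿ} (1 + |z|²/n)^{−n} dz ≤ 2·ω_n·n^{n/2}. -/

import Mathlib

/-!
In polar coordinates the integral of `(1 + |z|²/p)^(-p)` over `ℝⁿ` equals
`n ω_n ∫₀^∞ r^(n-1) (1 + r²/p)^(-p) dr`. Split the radial integral at `r = √p`: below it bound
`(1 + r²/p)^(-p)` by `1`, above it by `(r²/p)^(-p) = p^p r^(-2p)`. The two pieces contribute
`p^(n/2)/n` and `p^(n/2)/(2p - n)`, which for `p = n` add up to `2 n^(n/2)/n`.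
-/

open MeasureTheory Metric Set

noncomputable section

abbrev Euc (n : ℕ) := EuclideanSpace ℝ (Fin n)

/-- The Lebesgue volume of the unit ball in `ℝⁿ`. -/
def unitBallVol (n : ℕ) : ℝ := (volume (ball (0 : Euc n) 1)).toReal

section RadialIntegral

variable {p : ℝ}

lemma one_add_sq_div_rpow_neg_le_one (hp : 0 ≤ p) (y : ℝ) : (1 + y ^ 2 / p) ^ (-p) ≤ 1 :=
  Real.rpow_le_one_of_one_le_of_nonpos (le_add_of_nonneg_right (by positivity)) (neg_nonpos.2 hp)

lemma one_add_sq_div_rpow_neg_le (hp : 0 < p) {y : ℝ} (hy : 0 < y) :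
    (1 + y ^ 2 / p) ^ (-p) ≤ p ^ p * y ^ (-2 * p) :=
  calc (1 + y ^ 2 / p) ^ (-p) ≤ (y ^ 2 / p) ^ (-p) :=
        Real.rpow_le_rpow_of_nonpos (by positivity) (by linarith) (neg_nonpos.2 hp.le)
    _ = p ^ p * y ^ (-2 * p) := by
        rw [Real.div_rpow (by positivity) hp.le, Real.rpow_neg hp.le, ← Real.rpow_natCast,
          ← Real.rpow_mul hy.le]
        push_cast
        ring_nf
        field_simp

variable {n : ℕ}

lemma pow_pred_mul_one_add_sq_div_rpow_neg_le (hn : 1 ≤ n) (hp : 0 < p) {y : ℝ} (hy : 0 < y) :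
    y ^ (n - 1) * (1 + y ^ 2 / p) ^ (-p) ≤ p ^ p * y ^ ((n : ℝ) - 1 - 2 * p) :=
  calc y ^ (n - 1) * (1 + y ^ 2 / p) ^ (-p) ≤ y ^ (n - 1) * (p ^ p * y ^ (-2 * p)) := by
        gcongr; exact one_add_sq_div_rpow_neg_le hp hy
    _ = p ^ p * y ^ ((n : ℝ) - 1 - 2 * p) := by
        rw [show (n : ℝ) - 1 - 2 * p = ((n - 1 : ℕ) : ℝ) + -2 * p by push_cast [hn]; ring,
          Real.rpow_add hy, Real.rpow_natCast]
        ring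

lemma integral_Ioc_zero_pow_pred (hn : 1 ≤ n) {s : ℝ} (hs : 0 ≤ s) :
    ∫ y in Ioc 0 s, y ^ (n - 1) = s ^ n / n := by
  rw [← intervalIntegral.integral_of_le hs, integral_pow, Nat.sub_add_cancel hn,
    Nat.cast_pred hn, zero_pow (by omega)]
  ring

lemma integral_Ioi_sqrt_const_mul_rpow (hnp : (n : ℝ) < 2 * p) (hp : 0 < p) :
    ∫ y in Ioi √p, p ^ p * y ^ ((n : ℝ) - 1 - 2 * p) = √p ^ n / (2 * p - n) := by
  have hs : 0 < √p := Real.sqrt_pos.2 hp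
  rw [integral_const_mul, integral_Ioi_rpow_of_lt (by linarith) hs,
    show (n : ℝ) - 1 - 2 * p + 1 = n + 2 * -p by ring, Real.rpow_add hs, Real.rpow_natCast,
    Real.rpow_mul hs.le, Real.rpow_two, Real.sq_sqrt hp.le, Real.rpow_neg hp.le,
    show (n : ℝ) + 2 * -p = -(2 * p - n) by ring, neg_div_neg_eq]
  have : p ^ p ≠ 0 := by positivity
  field_simp

theorem integral_Ioi_pow_pred_mul_one_add_sq_div_rpow_neg_le (hn : 1 ≤ n)
    (hnp : (n : ℝ) < 2 * p) :
    ∫ y in Ioi 0, y ^ (n - 1) * (1 + y ^ 2 / p) ^ (-p) ≤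
      √p ^ n * (1 / n + 1 / (2 * p - n)) := by
  have hp : 0 < p := by
    have : (1 : ℝ) ≤ n := by exact_mod_cast hn
    linarith
  have hs : 0 < √p := Real.sqrt_pos.2 hp
  set f : ℝ → ℝ := fun y ↦ y ^ (n - 1) * (1 + y ^ 2 / p) ^ (-p)
  have hf : Continuous f := by
    refine (continuous_pow _).mul (Continuous.rpow_const (by fun_prop) fun y ↦ Or.inl ?_)
    positivity
  have htail : IntegrableOn (fun y ↦ p ^ p * y ^ ((n : ℝ) - 1 - 2 * p)) (Ioi √p) :=
    (integrableOn_Ioi_rpow_of_lt (by linarith) hs).const_mul _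
  have hbound : ∀ y ∈ Ioi √p, f y ≤ p ^ p * y ^ ((n : ℝ) - 1 - 2 * p) := fun y hy ↦
    pow_pred_mul_one_add_sq_div_rpow_neg_le hn hp (hs.trans hy)
  have hf_tail : IntegrableOn f (Ioi √p) := by
    refine htail.mono' hf.aestronglyMeasurable.restrict ?_
    filter_upwards [ae_restrict_mem measurableSet_Ioi] with y hy
    have hy0 : 0 < y := hs.trans hy
    rw [Real.norm_of_nonneg (by positivity)]
    exact hbound y hy
  calc ∫ y in Ioi 0, f y = (∫ y in Ioc 0 √p, f y) + ∫ y in Ioi √p, f y := by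
        rw [← Ioc_union_Ioi_eq_Ioi hs.le,
          setIntegral_union (Ioc_disjoint_Ioi le_rfl) measurableSet_Ioi hf.integrableOn_Ioc hf_tail]
    _ ≤ (∫ y in Ioc 0 √p, y ^ (n - 1)) + ∫ y in Ioi √p, p ^ p * y ^ ((n : ℝ) - 1 - 2 * p) := by
        gcongr ?_ + ?_
        · exact setIntegral_mono_on hf.integrableOn_Ioc (continuous_pow _).integrableOn_Ioc
            measurableSet_Ioc fun y hy ↦
              mul_le_of_le_one_right (pow_nonneg hy.1.le _) (one_add_sq_div_rpow_neg_le_one hp.le y)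
        · exact setIntegral_mono_on hf_tail htail measurableSet_Ioi hbound
    _ = √p ^ n * (1 / n + 1 / (2 * p - n)) := by
        rw [integral_Ioc_zero_pow_pred hn hs.le, integral_Ioi_sqrt_const_mul_rpow hnp hp]
        ring

end RadialIntegral

theorem integral_one_add_norm_sq_div_rpow_neg_le {E : Type*} [NormedAddCommGroup E]
    [NormedSpace ℝ E] [FiniteDimensional ℝ E] [Nontrivial E] [MeasurableSpace E] [BorelSpace E]
    (μ : Measure E) [μ.IsAddHaarMeasure] {p : ℝ}
    (hp : (Module.finrank ℝ E : ℝ) < 2 * p) :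
    ∫ x, (1 + ‖x‖ ^ 2 / p) ^ (-p) ∂μ ≤
      μ.real (ball 0 1) * p ^ ((Module.finrank ℝ E : ℝ) / 2) *
        (2 * p / (2 * p - Module.finrank ℝ E)) := by
  set n := Module.finrank ℝ E
  have hn : 1 ≤ n := Module.finrank_pos
  have hn0 : (0 : ℝ) < n := by exact_mod_cast hn
  have hsqrt : √p ^ n = p ^ ((n : ℝ) / 2) := by
    rw [Real.sqrt_eq_rpow, ← Real.rpow_mul_natCast (by linarith)]
    ring_nf
  rw [integral_fun_norm_addHaar μ fun r ↦ (1 + r ^ 2 / p) ^ (-p), nsmul_eq_mul, smul_eq_mul]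
  calc (n : ℝ) * (μ.real (ball 0 1) * ∫ y in Ioi 0, y ^ (n - 1) • (1 + y ^ 2 / p) ^ (-p))
      ≤ n * (μ.real (ball 0 1) * (√p ^ n * (1 / n + 1 / (2 * p - n)))) := by
        gcongr
        exact integral_Ioi_pow_pred_mul_one_add_sq_div_rpow_neg_le hn hp
    _ = μ.real (ball 0 1) * p ^ ((n : ℝ) / 2) * (2 * p / (2 * p - n)) := by
        have : 2 * p - n ≠ 0 := by linarith
        rw [hsqrt]
        field_simp
        ring

/-- **Upper bound for the normalization integral at `p = n`.** -/
theorem normalization_integral_upper_bound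
    {n : ℕ} (hn : 1 ≤ n) :
    ∫ z : Euc n, (1 + ‖z‖ ^ 2 / (n : ℝ)) ^ (-(n : ℝ))
      ≤ 2 * unitBallVol n * (n : ℝ) ^ ((n : ℝ) / 2) := by
  have : Nontrivial (Euc n) :=
    Module.nontrivial_of_finrank_pos (R := ℝ) (by rwa [finrank_euclideanSpace_fin])
  have hn0 : (0 : ℝ) < n := by exact_mod_cast hn
  have h := integral_one_add_norm_sq_div_rpow_neg_le (volume : Measure (Euc n))
    (p := n) (by rw [finrank_euclideanSpace_fin]; linarith)
  rw [finrank_euclideanSpace_fin, show 2 * (n : ℝ) / (2 * n - n) = 2 by field_simp; ring] at h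
  rw [unitBallVol, ← measureReal_def]
  linarith
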